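/- arXiv:1910.12758 — 4 statements merged into one kernel-verified Lean document; each statement's English description precedes it below -/
import Mathlib

section
/- Let π: ℝ → ℝ be a bounded measurable function with |π(t)| ≤ M, and let χ(t) = ∫_{-∞}^{t} e^{−(t−s)} π(s) ds. Fix integers γ < α ≤ β and τ ∈ ℝ. If |π(t + τ) − π(t)| ≤ ξ for all t ∈ [γ, β], then for all t ∈ [α, β]: |χ(t + τ) − χ(t)| ≤ 2M e^{−(α−γ)} + ξ(1 − e^{−(β−γ)}). -/
open MeasureTheory

/-- `χ(t) = ∫_{-∞}^t e^{-(t-s)} π(s) ds`. -/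
noncomputable def chi (π : ℝ → ℝ) (t : ℝ) : ℝ :=
  ∫ s in Set.Iic t, Real.exp (-(t - s)) * π s

lemma exp_split (t s : ℝ) : Real.exp (-(t - s)) = Real.exp (-t) * Real.exp s := by
  rw [← Real.exp_add]; ring_nf

lemma integrableOn_exp_mul {f : ℝ → ℝ} {C : ℝ} (t : ℝ) (hf : Measurable f)
    (hbd : ∀ s, |f s| ≤ C) :
    IntegrableOn (fun s => Real.exp (-(t - s)) * f s) (Set.Iic t) := by
  apply Integrable.mono' (((integrableOn_exp_Iic t).const_mul (C * Real.exp (-t))))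
  · exact ((Real.measurable_exp.comp
      ((measurable_const.sub measurable_id).neg)).mul hf).aestronglyMeasurable
  · filter_upwards with s
    rw [Real.norm_eq_abs, abs_mul, abs_of_pos (Real.exp_pos _), exp_split]
    have h1 : 0 ≤ Real.exp (-t) * Real.exp s := le_of_lt (by positivity)
    have h2 := (abs_nonneg (f s)).trans (hbd s)
    have := hbd s
    nlinarith [Real.exp_pos (-t), Real.exp_pos s]

lemma chi_shift (π : ℝ → ℝ) (t τ : ℝ) :
    chi π (t + τ) = ∫ s in Set.Iic t, Real.exp (-(t - s)) * π (s + τ) := by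
  unfold chi
  rw [← MeasureTheory.integral_indicator measurableSet_Iic,
    ← MeasureTheory.integral_indicator measurableSet_Iic,
    ← integral_add_right_eq_self
      ((Set.Iic (t + τ)).indicator fun s => Real.exp (-(t + τ - s)) * π s) τ]
  congr 1; ext s
  by_cases h : s ≤ t
  · rw [Set.indicator_of_mem (by simpa using h : s + τ ∈ Set.Iic (t + τ)),
      Set.indicator_of_mem (Set.mem_Iic.mpr h)]
    have : t + τ - (s + τ) = t - s := by ring
    rw [this]
  · rw [Set.indicator_of_notMem (by simpa using h),
      Set.indicator_of_notMem (by simpa using h)]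

/-- If `|π(t+τ) - π(t)| ≤ ξ` on `[γ, β]`, then for `t ∈ [α, β]`,
`|χ(t+τ) - χ(t)| ≤ 2M e^{-(α-γ)} + ξ(1 - e^{-(β-γ)})`. -/
theorem chi_shift_estimate (π : ℝ → ℝ) (M : ℝ)
    (hmeas : Measurable π) (hbd : ∀ t, |π t| ≤ M)
    (γ α β : ℤ) (hγα : γ < α) (hαβ : α ≤ β) (τ ξ : ℝ)
    (hπ : ∀ t ∈ Set.Icc (γ : ℝ) (β : ℝ), |π (t + τ) - π t| ≤ ξ) :
    ∀ t ∈ Set.Icc (α : ℝ) (β : ℝ),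
      |chi π (t + τ) - chi π t| ≤
        2 * M * Real.exp (-((α : ℝ) - γ)) + ξ * (1 - Real.exp (-((β : ℝ) - γ))) := by
  intro t ht
  obtain ⟨htα, htβ⟩ := ht
  have hγα' : (γ : ℝ) ≤ α := by exact_mod_cast hγα.le
  have hγβ' : (γ : ℝ) ≤ β := by exact_mod_cast (hγα.le.trans hαβ)
  have hγt : (γ : ℝ) ≤ t := hγα'.trans htα
  have hM : 0 ≤ M := (abs_nonneg _).trans (hbd 0)
  have hξ : 0 ≤ ξ := (abs_nonneg _).trans (hπ γ ⟨le_refl _, hγβ'⟩)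
  -- integrability
  have hπτ : Measurable (fun s => π (s + τ)) := hmeas.comp (measurable_id.add_const τ)
  have h1 : IntegrableOn (fun s => Real.exp (-(t - s)) * π (s + τ)) (Set.Iic t) :=
    integrableOn_exp_mul t hπτ (fun s => hbd _)
  have h2 : IntegrableOn (fun s => Real.exp (-(t - s)) * π s) (Set.Iic t) :=
    integrableOn_exp_mul t hmeas hbd
  have hdmeas : Measurable (fun s => π (s + τ) - π s) := hπτ.sub hmeas
  have hdbd : ∀ s, |π (s + τ) - π s| ≤ 2 * M := by
    intro s
    calc |π (s + τ) - π s| ≤ |π (s + τ)| + |π s| := abs_sub _ _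
      _ ≤ M + M := add_le_add (hbd _) (hbd _)
      _ = 2 * M := by ring
  have hD : IntegrableOn (fun s => Real.exp (-(t - s)) * (π (s + τ) - π s)) (Set.Iic t) :=
    integrableOn_exp_mul t hdmeas hdbd
  -- the difference as one integral
  have hdiff : chi π (t + τ) - chi π t
      = ∫ s in Set.Iic t, Real.exp (-(t - s)) * (π (s + τ) - π s) := by
    rw [chi_shift π t τ]
    unfold chi
    rw [← MeasureTheory.integral_sub h1 h2]
    congr 1; ext s; ring
  -- split the integral at γ
  have hDγ : IntegrableOn (fun s => Real.exp (-(t - s)) * (π (s + τ) - π s)) (Set.Iic (γ : ℝ)) :=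
    hD.mono_set (Set.Iic_subset_Iic.2 hγt)
  have hDo : IntegrableOn (fun s => Real.exp (-(t - s)) * (π (s + τ) - π s))
      (Set.Ioc (γ : ℝ) t) := hD.mono_set Set.Ioc_subset_Iic_self
  have hsplit : (∫ s in Set.Iic t, Real.exp (-(t - s)) * (π (s + τ) - π s))
      = (∫ s in Set.Iic (γ : ℝ), Real.exp (-(t - s)) * (π (s + τ) - π s))
        + ∫ s in Set.Ioc (γ : ℝ) t, Real.exp (-(t - s)) * (π (s + τ) - π s) := by
    rw [← MeasureTheory.setIntegral_union (Set.Iic_disjoint_Ioc le_rfl) measurableSet_Ioc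
      hDγ hDo, Set.Iic_union_Ioc_eq_Iic hγt]
  -- bound on (-∞, γ]
  have bound1 : |∫ s in Set.Iic (γ : ℝ), Real.exp (-(t - s)) * (π (s + τ) - π s)|
      ≤ 2 * M * Real.exp (-(t - γ)) := by
    have hb : ∀ᵐ s ∂(volume.restrict (Set.Iic (γ : ℝ))),
        ‖Real.exp (-(t - s)) * (π (s + τ) - π s)‖ ≤ 2 * M * Real.exp (-(t - s)) := by
      filter_upwards with s
      rw [Real.norm_eq_abs, abs_mul, abs_of_pos (Real.exp_pos _)]
      have := hdbd s
      nlinarith [Real.exp_pos (-(t - s)), abs_nonneg (π (s + τ) - π s)]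
    have hg : IntegrableOn (fun s => 2 * M * Real.exp (-(t - s))) (Set.Iic (γ : ℝ)) := by
      have : IntegrableOn (fun s => Real.exp s) (Set.Iic (γ : ℝ)) := integrableOn_exp_Iic _
      have h3 := this.const_mul (2 * M * Real.exp (-t))
      exact h3.congr (Filter.Eventually.of_forall fun s => by simp only [exp_split]; ring)
    have key := MeasureTheory.norm_integral_le_of_norm_le hg hb
    rw [Real.norm_eq_abs] at key
    refine key.trans (le_of_eq ?_)
    have : (∫ s in Set.Iic (γ : ℝ), 2 * M * Real.exp (-(t - s)))
        = ∫ s in Set.Iic (γ : ℝ), 2 * M * Real.exp (-t) * Real.exp s := by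
      congr 1; ext s; rw [exp_split]; ring
    rw [this, MeasureTheory.integral_const_mul, integral_exp_Iic, exp_split]
    ring
  -- bound on (γ, t]
  have bound2 : |∫ s in Set.Ioc (γ : ℝ) t, Real.exp (-(t - s)) * (π (s + τ) - π s)|
      ≤ ξ * (1 - Real.exp (-(t - γ))) := by
    have hb : ∀ᵐ s ∂(volume.restrict (Set.Ioc (γ : ℝ) t)),
        ‖Real.exp (-(t - s)) * (π (s + τ) - π s)‖ ≤ ξ * Real.exp (-(t - s)) := by
      rw [ae_restrict_iff' measurableSet_Ioc]
      filter_upwards with s hs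
      rw [Real.norm_eq_abs, abs_mul, abs_of_pos (Real.exp_pos _)]
      have hsb : |π (s + τ) - π s| ≤ ξ := hπ s ⟨hs.1.le, hs.2.trans htβ⟩
      nlinarith [Real.exp_pos (-(t - s)), abs_nonneg (π (s + τ) - π s)]
    have hg : IntegrableOn (fun s => ξ * Real.exp (-(t - s))) (Set.Ioc (γ : ℝ) t) := by
      have : IntegrableOn (fun s => Real.exp s) (Set.Ioc (γ : ℝ) t) :=
        (integrableOn_exp_Iic t).mono_set Set.Ioc_subset_Iic_self
      have h3 := this.const_mul (ξ * Real.exp (-t))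
      exact h3.congr (Filter.Eventually.of_forall fun s => by simp only [exp_split]; ring)
    have key := MeasureTheory.norm_integral_le_of_norm_le hg hb
    rw [Real.norm_eq_abs] at key
    refine key.trans (le_of_eq ?_)
    have e1 : (∫ s in Set.Ioc (γ : ℝ) t, ξ * Real.exp (-(t - s)))
        = ∫ s in Set.Ioc (γ : ℝ) t, ξ * Real.exp (-t) * Real.exp s := by
      congr 1; ext s; rw [exp_split]; ring
    have e2 : (∫ s in Set.Ioc (γ : ℝ) t, Real.exp s) = Real.exp t - Real.exp γ := by
      rw [← intervalIntegral.integral_of_le hγt, integral_exp]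
    rw [e1, MeasureTheory.integral_const_mul, e2, exp_split]
    have hh : Real.exp (-t) * Real.exp t = 1 := by rw [← Real.exp_add]; simp
    linear_combination ξ * hh
  -- combine
  rw [hdiff, hsplit]
  have expmono1 : Real.exp (-(t - γ)) ≤ Real.exp (-((α : ℝ) - γ)) :=
    Real.exp_le_exp.2 (by linarith)
  have expmono2 : Real.exp (-((β : ℝ) - γ)) ≤ Real.exp (-(t - γ)) :=
    Real.exp_le_exp.2 (by linarith)
  calc |(∫ s in Set.Iic (γ : ℝ), Real.exp (-(t - s)) * (π (s + τ) - π s))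
        + ∫ s in Set.Ioc (γ : ℝ) t, Real.exp (-(t - s)) * (π (s + τ) - π s)|
      ≤ |∫ s in Set.Iic (γ : ℝ), Real.exp (-(t - s)) * (π (s + τ) - π s)|
        + |∫ s in Set.Ioc (γ : ℝ) t, Real.exp (-(t - s)) * (π (s + τ) - π s)| := abs_add_le _ _
    _ ≤ 2 * M * Real.exp (-(t - γ)) + ξ * (1 - Real.exp (-(t - γ))) := add_le_add bound1 bound2
    _ ≤ 2 * M * Real.exp (-((α : ℝ) - γ)) + ξ * (1 - Real.exp (-((β : ℝ) - γ))) := by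
        have h1 : 2 * M * Real.exp (-(t - γ)) ≤ 2 * M * Real.exp (-((α : ℝ) - γ)) := by
          apply mul_le_mul_of_nonneg_left expmono1 (by linarith)
        have h2 : ξ * (1 - Real.exp (-(t - γ))) ≤ ξ * (1 - Real.exp (-((β : ℝ) - γ))) := by
          apply mul_le_mul_of_nonneg_left (by linarith) hξ
        linarith
end

section
/- Let π: ℝ → ℝ be bounded measurable, χ(t) = ∫_{-∞}^{t} e^{−(t−s)} π(s) ds, τ ∈ ℝ, η ∈ ℝ, and ε₀ > 0. Suppose |π(s + τ) − π(s)| ≥ ε₀ for all s ∈ [η, η + 1) and |χ(η + τ) − χ(η)| < ε₀/8, and suppose π(s+τ) − π(s) does not change sign on [η, η+1). Then there exists 0 < κ < 1 such that |χ(t + τ) − χ(t)| ≥ ε₀/24 for all t ∈ [η + κ, η + 1). -/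
open MeasureTheory

/-! The difference `Δ(s) = π(s + τ) - π(s)` is again bounded and measurable, and
`χ(t + τ) - χ(t)` is the kernel transform of `Δ`. By variation of constants it equals
`e^{-(t-η)} (χ(η + τ) - χ(η)) + ∫_η^t e^{-(t-s)} Δ(s) ds`. Since `|Δ| ≥ ε₀` on `[η, η + 1)`
without sign change, the integral has modulus at least `ε₀ (1 - e^{-(t-η)})`, which is
`≥ ε₀/6` once `t - η ≥ 1/5`; the first term is below `ε₀/8`, leaving `ε₀/24`. -/

section

open Set Real

section Kernel

variable {g : ℝ → ℝ} {M : ℝ}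

lemma integrableOn_exp_neg_sub_mul (hg : Measurable g) (hgM : ∀ s, |g s| ≤ M) (t : ℝ) :
    IntegrableOn (fun s => exp (-(t - s)) * g s) (Iic t) := by
  have hexp : IntegrableOn (fun s => exp (-(t - s))) (Iic t) := by
    refine IntegrableOn.congr_fun ((integrableOn_exp_Iic t).mul_const (exp (-t)))
      (fun s _ => ?_) measurableSet_Iic
    rw [← exp_add]; ring_nf
  exact hexp.mul_bdd (c := M) hg.aestronglyMeasurable.restrict
    (ae_of_all _ fun s => by simpa only [norm_eq_abs] using hgM s)

lemma chi_add_const (f : ℝ → ℝ) (t τ : ℝ) :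
    chi f (t + τ) = chi (fun s => f (s + τ)) t := by
  have hpre : (fun s : ℝ => s + τ) ⁻¹' Iic (t + τ) = Iic t := by ext; simp
  have key := (measurePreserving_add_right volume τ).setIntegral_preimage_emb
    (MeasurableEquiv.addRight τ).measurableEmbedding
    (fun s => exp (-(t + τ - s)) * f s) (Iic (t + τ))
  rw [hpre] at key
  rw [chi, chi, ← key]
  simp only [add_sub_add_right_eq_sub]

lemma chi_add_const_sub_chi {f : ℝ → ℝ} (hf : Measurable f) (hfM : ∀ s, |f s| ≤ M)
    (t τ : ℝ) : chi f (t + τ) - chi f t = chi (fun s => f (s + τ) - f s) t := by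
  rw [chi_add_const, chi, chi, chi, ← integral_sub
    (integrableOn_exp_neg_sub_mul (g := fun s => f (s + τ)) (hf.comp (measurable_add_const τ))
      (fun s => hfM _) t)
    (integrableOn_exp_neg_sub_mul hf hfM t)]
  simp only [mul_sub]

lemma chi_eq_exp_mul_chi_add_integral (hg : Measurable g) (hgM : ∀ s, |g s| ≤ M)
    {η t : ℝ} (hηt : η ≤ t) :
    chi g t = exp (-(t - η)) * chi g η + ∫ s in Ioc η t, exp (-(t - s)) * g s := by
  have hint := integrableOn_exp_neg_sub_mul hg hgM t
  rw [chi, ← Iic_union_Ioc_eq_Iic hηt, setIntegral_union (Iic_disjoint_Ioc le_rfl)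
    measurableSet_Ioc (hint.mono_set (Iic_subset_Iic.mpr hηt)) (hint.mono_set Ioc_subset_Iic_self),
    chi, ← integral_const_mul]
  congr 1
  refine setIntegral_congr_fun measurableSet_Iic fun s _ => ?_
  rw [← mul_assoc, ← exp_add]
  ring_nf

end Kernel

lemma integral_Ioc_exp_neg_sub {η t : ℝ} (hηt : η ≤ t) :
    ∫ s in Ioc η t, exp (-(t - s)) = 1 - exp (-(t - η)) := by
  rw [← intervalIntegral.integral_of_le hηt]
  simp only [neg_sub]
  rw [intervalIntegral.integral_comp_sub_right (fun x => exp x) t, integral_exp, sub_self,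
    exp_zero]

section LowerBound

variable {g : ℝ → ℝ} {η t ε : ℝ}

lemma mul_one_sub_exp_le_integral (hηt : η ≤ t)
    (hint : IntegrableOn (fun s => exp (-(t - s)) * g s) (Ioc η t))
    (hεg : ∀ s ∈ Ioc η t, ε ≤ g s) :
    ε * (1 - exp (-(t - η))) ≤ ∫ s in Ioc η t, exp (-(t - s)) * g s :=
  calc ε * (1 - exp (-(t - η))) = ∫ s in Ioc η t, exp (-(t - s)) * ε := by
        rw [integral_mul_const, integral_Ioc_exp_neg_sub hηt, mul_comm]
    _ ≤ ∫ s in Ioc η t, exp (-(t - s)) * g s :=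
        setIntegral_mono_on (Continuous.integrableOn_Ioc (by fun_prop)) hint measurableSet_Ioc
          fun s hs => mul_le_mul_of_nonneg_left (hεg s hs) (exp_pos _).le

lemma mul_one_sub_exp_le_abs_integral (hηt : η ≤ t)
    (hint : IntegrableOn (fun s => exp (-(t - s)) * g s) (Ioc η t))
    (hεg : ∀ s ∈ Ioc η t, ε ≤ |g s|)
    (hsign : (∀ s ∈ Ioc η t, 0 ≤ g s) ∨ (∀ s ∈ Ioc η t, g s ≤ 0)) :
    ε * (1 - exp (-(t - η))) ≤ |∫ s in Ioc η t, exp (-(t - s)) * g s| := by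
  rcases hsign with hpos | hneg
  · refine (mul_one_sub_exp_le_integral hηt hint fun s hs => ?_).trans (le_abs_self _)
    simpa only [abs_of_nonneg (hpos s hs)] using hεg s hs
  · have hint' : IntegrableOn (fun s => exp (-(t - s)) * -g s) (Ioc η t) := by
      simpa only [Pi.neg_def, mul_neg] using hint.neg
    refine (mul_one_sub_exp_le_integral hηt hint' fun s hs => ?_).trans ?_
    · simpa only [abs_of_nonpos (hneg s hs)] using hεg s hs
    · simpa only [mul_neg, integral_neg] using neg_le_abs _

end LowerBound

lemma exp_neg_le_five_sixths {x : ℝ} (hx : 1 / 5 ≤ x) : exp (-x) ≤ 5 / 6 := by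
  have h : (6 / 5 : ℝ) ≤ exp x := by linarith [add_one_le_exp x]
  rw [exp_neg]
  calc (exp x)⁻¹ ≤ (6 / 5 : ℝ)⁻¹ := inv_anti₀ (by norm_num) h
    _ = 5 / 6 := by norm_num

end

/-- Case (i): if `|π(s+τ) - π(s)| ≥ ε₀` on `[η, η+1)` (without sign change) while
`|χ(η+τ) - χ(η)| < ε₀/8`, then `|χ(t+τ) - χ(t)| ≥ ε₀/24` on `[η+κ, η+1)` for some
`0 < κ < 1`. -/
theorem chi_separation_case_i (π : ℝ → ℝ) (M : ℝ)
    (hmeas : Measurable π) (hbd : ∀ t, |π t| ≤ M)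
    (τ η ε₀ : ℝ) (hε₀ : 0 < ε₀)
    (hsep : ∀ s ∈ Set.Ico η (η + 1), ε₀ ≤ |π (s + τ) - π s|)
    (hsign : (∀ s ∈ Set.Ico η (η + 1), 0 ≤ π (s + τ) - π s) ∨
             (∀ s ∈ Set.Ico η (η + 1), π (s + τ) - π s ≤ 0))
    (hsmall : |chi π (η + τ) - chi π η| < ε₀ / 8) :
    ∃ κ : ℝ, 0 < κ ∧ κ < 1 ∧
      ∀ t ∈ Set.Ico (η + κ) (η + 1), ε₀ / 24 ≤ |chi π (t + τ) - chi π t| := by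
  set Δ : ℝ → ℝ := fun s => π (s + τ) - π s
  have hΔ : Measurable Δ := (hmeas.comp (measurable_add_const τ)).sub hmeas
  have hΔM : ∀ s, |Δ s| ≤ M + M := fun s => (abs_sub _ _).trans (add_le_add (hbd _) (hbd _))
  refine ⟨1 / 5, by norm_num, by norm_num, fun t ⟨hκt, ht1⟩ => ?_⟩
  have hηt : η ≤ t := by linarith
  have hsub : Set.Ioc η t ⊆ Set.Ico η (η + 1) := fun s hs => ⟨hs.1.le, hs.2.trans_lt ht1⟩
  set e := Real.exp (-(t - η))
  set I := ∫ s in Set.Ioc η t, Real.exp (-(t - s)) * Δ s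
  have hvoc : chi π (t + τ) - chi π t = e * (chi π (η + τ) - chi π η) + I := by
    rw [chi_add_const_sub_chi hmeas hbd, chi_add_const_sub_chi hmeas hbd,
      chi_eq_exp_mul_chi_add_integral hΔ hΔM hηt]
  have hI : ε₀ * (1 - e) ≤ |I| :=
    mul_one_sub_exp_le_abs_integral hηt
      ((integrableOn_exp_neg_sub_mul hΔ hΔM t).mono_set Set.Ioc_subset_Iic_self)
      (fun s hs => hsep s (hsub hs))
      (hsign.imp (fun h s hs => h s (hsub hs)) fun h s hs => h s (hsub hs))
  have he : e ≤ 5 / 6 := exp_neg_le_five_sixths (by linarith)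
  have hfirst : |e * (chi π (η + τ) - chi π η)| ≤ ε₀ / 8 := by
    rw [abs_mul, abs_of_pos (Real.exp_pos _)]
    exact (mul_le_of_le_one_left (abs_nonneg _) (by linarith)).trans hsmall.le
  have hdiff := abs_sub_abs_le_abs_sub I (-(e * (chi π (η + τ) - chi π η)))
  rw [sub_neg_eq_add, add_comm I, abs_neg] at hdiff
  rw [hvoc]
  linarith [mul_le_mul_of_nonneg_left he hε₀.le]
end

section
/- Let π: ℝ → ℝ be bounded measurable with |π(s + τ) − π(s)| ≤ ε₀ for all s, let χ(t) = ∫_{-∞}^{t} e^{−(t−s)} π(s) ds, and suppose |χ(η + τ) − χ(η)| ≥ ε₀/8 for some η ∈ ℝ. Then there exists 0 < κ < 1 such that |χ(t + τ) − χ(t)| ≥ ε₀/24 for all t ∈ [η, η + κ). -/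
/-! Bounded `π` makes `χ` Lipschitz with constant `2M`, so the increment `χ(t + τ) - χ(t)` drifts
by at most `4M (t - η)` from its value at `η`. On a window of length `κ ≈ ε₀ / (48 M)` the drift
is at most `ε₀ / 12 = ε₀ / 8 - ε₀ / 24`. -/

open MeasureTheory

open Set
open Real (exp exp_pos exp_le_exp exp_add add_one_le_exp continuous_exp)

section

variable {π : ℝ → ℝ} {M : ℝ}

lemma chi_eq_exp_neg_mul (t : ℝ) :
    chi π t = exp (-t) * ∫ s in Iic t, exp s * π s := by
  rw [chi, ← integral_const_mul]
  congr 1 with s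
  rw [← mul_assoc, ← exp_add]
  ring_nf

lemma integrableOn_exp_mul_Iic_of_abs_le (hmeas : Measurable π) (hbd : ∀ s, |π s| ≤ M)
    (a : ℝ) :
    IntegrableOn (fun s => exp s * π s) (Iic a) :=
  (integrableOn_exp_Iic a).mul_bdd hmeas.aestronglyMeasurable (ae_of_all _ hbd)

lemma abs_exp_mul_le (hbd : ∀ s, |π s| ≤ M) (s : ℝ) : |exp s * π s| ≤ M * exp s := by
  rw [abs_mul, abs_of_pos (exp_pos s), mul_comm]
  exact mul_le_mul_of_nonneg_right (hbd s) (exp_pos s).le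

lemma abs_integral_exp_mul_Iic_le (hbd : ∀ s, |π s| ≤ M) (a : ℝ) :
    |∫ s in Iic a, exp s * π s| ≤ M * exp a := by
  calc |∫ s in Iic a, exp s * π s| ≤ ∫ s in Iic a, M * exp s :=
        norm_integral_le_of_norm_le (f := fun s => exp s * π s)
          ((integrableOn_exp_Iic a).const_mul M)
          (ae_of_all _ (abs_exp_mul_le hbd))
    _ = M * exp a := by rw [integral_const_mul, integral_exp_Iic]

lemma abs_intervalIntegral_exp_mul_le (hbd : ∀ s, |π s| ≤ M) {a b : ℝ} (hab : a ≤ b) :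
    |∫ s in a..b, exp s * π s| ≤ M * (exp b - exp a) := by
  calc |∫ s in a..b, exp s * π s| ≤ ∫ s in a..b, M * exp s :=
        intervalIntegral.norm_integral_le_of_norm_le (f := fun s => exp s * π s) hab
          (ae_of_all _ fun s _ => abs_exp_mul_le hbd s)
          ((continuous_exp.intervalIntegrable a b).const_mul M)
    _ = M * (exp b - exp a) := by rw [intervalIntegral.integral_const_mul, integral_exp]

/-- Writing `χ(t) = e^{-t} F(t)` with `F(t) = ∫_{-∞}^t e^s π(s) ds`, the increment splits as
`(e^{-b} - e^{-a}) F(a) + e^{-b} (F(b) - F(a))`, and each piece is at most `M (1 - e^{a-b})`. -/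
lemma abs_chi_sub_le (hmeas : Measurable π) (hbd : ∀ s, |π s| ≤ M) {a b : ℝ}
    (hab : a ≤ b) :
    |chi π b - chi π a| ≤ 2 * M * (b - a) := by
  have hM : 0 ≤ M := (abs_nonneg _).trans (hbd 0)
  set F : ℝ → ℝ := fun t => ∫ s in Iic t, exp s * π s
  have hFba : F b - F a = ∫ s in a..b, exp s * π s :=
    intervalIntegral.integral_Iic_sub_Iic (integrableOn_exp_mul_Iic_of_abs_le hmeas hbd a)
      (integrableOn_exp_mul_Iic_of_abs_le hmeas hbd b)
  have hsplit : chi π b - chi π a = (exp (-b) - exp (-a)) * F a + exp (-b) * (F b - F a) := by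
    rw [chi_eq_exp_neg_mul, chi_eq_exp_neg_mul]; ring
  have hexp : exp (-b) ≤ exp (-a) := exp_le_exp.mpr (by linarith)
  calc |chi π b - chi π a|
      ≤ (exp (-a) - exp (-b)) * |F a| + exp (-b) * |F b - F a| := by
        rw [hsplit]
        refine (abs_add_le _ _).trans_eq ?_
        rw [abs_mul, abs_mul, abs_of_nonpos (by linarith), abs_of_pos (exp_pos _)]
        ring
    _ ≤ (exp (-a) - exp (-b)) * (M * exp a) + exp (-b) * (M * (exp b - exp a)) :=
        add_le_add
          (mul_le_mul_of_nonneg_left (abs_integral_exp_mul_Iic_le hbd a) (by linarith))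
          (mul_le_mul_of_nonneg_left (hFba ▸ abs_intervalIntegral_exp_mul_le hbd hab)
            (exp_pos _).le)
    _ = 2 * M * (1 - exp (-(b - a))) := by
        have ha : exp (-a) * exp a = 1 := by rw [← exp_add]; simp
        have hb : exp (-b) * exp b = 1 := by rw [← exp_add]; simp
        have hba : exp (-b) * exp a = exp (-(b - a)) := by rw [← exp_add]; ring_nf
        linear_combination M * ha + M * hb - 2 * M * hba
    _ ≤ 2 * M * (b - a) :=
        mul_le_mul_of_nonneg_left (by linarith [add_one_le_exp (-(b - a))]) (by positivity)

lemma abs_chi_increment_sub_le (hmeas : Measurable π) (hbd : ∀ s, |π s| ≤ M) (τ : ℝ)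
    {η t : ℝ} (hηt : η ≤ t) :
    |(chi π (t + τ) - chi π t) - (chi π (η + τ) - chi π η)| ≤ 4 * M * (t - η) := by
  have hshift : |chi π (t + τ) - chi π (η + τ)| ≤ 2 * M * (t - η) := by
    simpa only [add_sub_add_right_eq_sub] using
      abs_chi_sub_le hmeas hbd (by linarith : η + τ ≤ t + τ)
  have hbase := abs_chi_sub_le hmeas hbd hηt
  calc |(chi π (t + τ) - chi π t) - (chi π (η + τ) - chi π η)|
      = |(chi π (t + τ) - chi π (η + τ)) - (chi π t - chi π η)| := by ring_nf
    _ ≤ |chi π (t + τ) - chi π (η + τ)| + |chi π t - chi π η| := abs_sub _ _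
    _ ≤ 4 * M * (t - η) := by linarith

end

theorem chi_separation_case_ii_general (π : ℝ → ℝ) (M : ℝ)
    (hmeas : Measurable π) (hbd : ∀ t, |π t| ≤ M)
    (τ η ε₀ : ℝ) (hε₀ : 0 < ε₀)
    (hbig : ε₀ / 8 ≤ |chi π (η + τ) - chi π η|) :
    ∃ κ : ℝ, 0 < κ ∧ κ < 1 ∧
      ∀ t ∈ Set.Ico η (η + κ), ε₀ / 24 ≤ |chi π (t + τ) - chi π t| := by
  have hM : 0 ≤ M := (abs_nonneg _).trans (hbd 0)
  set κ := min (ε₀ / (48 * (M + 1))) (1 / 2)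
  have hκM : 4 * M * κ ≤ ε₀ / 12 := by
    calc 4 * M * κ ≤ 4 * M * (ε₀ / (48 * (M + 1))) := by gcongr; exact min_le_left _ _
      _ = ε₀ / 12 * (M / (M + 1)) := by field_simp; ring
      _ ≤ ε₀ / 12 := mul_le_of_le_one_right (by positivity)
          ((div_le_one (by positivity)).mpr (by linarith))
  refine ⟨κ, lt_min (by positivity) (by norm_num),
    (min_le_right _ _).trans_lt (by norm_num), ?_⟩
  rintro t ⟨hηt, htκ⟩
  have hdrift := abs_chi_increment_sub_le hmeas hbd τ hηt
  have hdrift_small : 4 * M * (t - η) ≤ ε₀ / 12 :=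
    le_trans (by gcongr; linarith) hκM
  rw [abs_sub_comm] at hdrift
  linarith [abs_sub_abs_le_abs_sub (chi π (η + τ) - chi π η) (chi π (t + τ) - chi π t)]

/-- Case (ii): if `|π(s+τ) - π(s)| ≤ ε₀` for all `s` and `|χ(η+τ) - χ(η)| ≥ ε₀/8`,
then `|χ(t+τ) - χ(t)| ≥ ε₀/24` on `[η, η+κ)` for some `0 < κ < 1`. -/
theorem chi_separation_case_ii (π : ℝ → ℝ) (M : ℝ)
    (hmeas : Measurable π) (hbd : ∀ t, |π t| ≤ M)
    (τ η ε₀ : ℝ) (hε₀ : 0 < ε₀)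
    (hπ : ∀ s : ℝ, |π (s + τ) - π s| ≤ ε₀)
    (hbig : ε₀ / 8 ≤ |chi π (η + τ) - chi π η|) :
    ∃ κ : ℝ, 0 < κ ∧ κ < 1 ∧
      ∀ t ∈ Set.Ico η (η + κ), ε₀ / 24 ≤ |chi π (t + τ) - chi π t| :=
  chi_separation_case_ii_general π M hmeas hbd τ η ε₀ hε₀ hbig
end

section
/- Let a ≠ b be real numbers and let (i*_k)_{k∈ℤ} be an unpredictable sequence with values in {a, b}, with unpredictability constant ε₀ = |a − b| and sequences of positive integers ζ_n, η_n → ∞ satisfying: i*_{k+ζ_n} → i*_k as n → ∞ for each k in bounded intervals, and |i*_{ζ_n+η_n} − i*_{η_n}| ≥ ε₀ for all n. Define π(t) = i*_k for t ∈ [k, k+1) and χ(t) = ∫_{-∞}^{t} e^{−(t−s)} π(s) ds. Then χ is an unpredictable function: χ is uniformly continuous and bounded, χ(t + ζ_n) → χ(t) uniformly on compact subsets of ℝ, and there exist σ > 0, ε₁ > 0 and a sequence u_n → ∞ such that |χ(t + ζ_n) − χ(t)| ≥ ε₁ for all t ∈ [u_n − σ, u_n + σ] and all n. -/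
open MeasureTheory Filter

/-!
The kernel `e^{-(t-s)}` has total mass one and forgets the past exponentially. Hence `χ` is
bounded by `sup |π|` and Lipschitz, and `χ(t + c) - χ(t)` is `χ` of the difference
`π(· + c) - π`, which is small on `[α, β]` as soon as that difference is small on a long window
ending at `β`. On `[η_n, η_n + 1)` the difference `π(· + ζ_n) - π` is a constant `D_n` with
`|D_n| ≥ |a - b|`, so there `χ` of it relaxes exponentially from its value at `η_n` towards `D_n`:
it is at least `|D_n| / 16` either just after `η_n` (if it starts large) or near `η_n + 3/4`.
-/

open Set

lemma exp_neg_sub (t s : ℝ) : Real.exp (-(t - s)) = Real.exp s * Real.exp (-t) := by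
  rw [← Real.exp_add]; ring_nf

lemma integrableOn_exp_neg_sub_Iic (t u : ℝ) :
    IntegrableOn (fun s => Real.exp (-(t - s))) (Iic u) := by
  simp_rw [exp_neg_sub]
  exact (integrableOn_exp_Iic u).mul_const (Real.exp (-t))

lemma integral_exp_neg_sub_Iic (t : ℝ) : ∫ s in Iic t, Real.exp (-(t - s)) = 1 := by
  simp_rw [exp_neg_sub]
  rw [integral_mul_const, integral_exp_Iic, ← Real.exp_add, add_neg_cancel, Real.exp_zero]

lemma integral_exp_neg_sub_Ioc {t₀ t : ℝ} (h : t₀ ≤ t) :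
    ∫ s in Ioc t₀ t, Real.exp (-(t - s)) = 1 - Real.exp (-(t - t₀)) := by
  rw [← intervalIntegral.integral_of_le h]
  simp_rw [exp_neg_sub]
  rw [intervalIntegral.integral_mul_const, integral_exp, sub_mul, ← Real.exp_add, ← Real.exp_add,
    add_neg_cancel, Real.exp_zero]

lemma exists_forall_Icc_le_abs_exp_mul_add (x D : ℝ) :
    ∃ c ∈ Icc (1 / 8 : ℝ) (3 / 4), ∀ r ∈ Icc (c - 1 / 8) (c + 1 / 8),
      |D| / 16 ≤ |Real.exp (-r) * x + (1 - Real.exp (-r)) * D| := by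
  rcases le_or_gt (|D| / 2) |x| with hx | hx
  · refine ⟨1 / 8, by norm_num, fun r hr => ?_⟩
    norm_num at hr
    have h1 : 1 - r ≤ Real.exp (-r) := by linarith [Real.add_one_le_exp (-r)]
    have h2 : Real.exp (-r) ≤ 1 := Real.exp_le_one_iff.2 (by linarith [hr.1])
    calc |D| / 16 ≤ (1 - r) * |x| - r * |D| := by
          nlinarith [mul_le_mul_of_nonneg_left hx (by linarith [hr.2] : (0 : ℝ) ≤ 1 - r),
            abs_nonneg D]
      _ ≤ Real.exp (-r) * |x| - (1 - Real.exp (-r)) * |D| := by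
          nlinarith [abs_nonneg x, abs_nonneg D, hr.1]
      _ ≤ _ := by
          have := abs_sub_abs_le_abs_sub (Real.exp (-r) * x) (-((1 - Real.exp (-r)) * D))
          rwa [abs_neg, sub_neg_eq_add, abs_mul, abs_mul, abs_of_pos (Real.exp_pos _),
            abs_of_nonneg (sub_nonneg.2 h2)] at this
  · refine ⟨3 / 4, by norm_num, fun r hr => ?_⟩
    norm_num at hr
    have h1 : Real.exp (-r) ≤ 8 / 13 := by
      rw [Real.exp_neg, inv_le_comm₀ (Real.exp_pos _) (by norm_num)]
      linarith [Real.add_one_le_exp r, hr.1]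
    have h0 := Real.exp_pos (-r)
    calc |D| / 16 ≤ (1 - Real.exp (-r)) * |D| - Real.exp (-r) * |x| := by
          nlinarith [abs_nonneg D]
      _ ≤ _ := by
          have := abs_sub_abs_le_abs_sub ((1 - Real.exp (-r)) * D) (-(Real.exp (-r) * x))
          rwa [abs_neg, sub_neg_eq_add, add_comm, abs_mul, abs_mul, abs_of_pos h0,
            abs_of_nonneg (by linarith : (0 : ℝ) ≤ 1 - Real.exp (-r))] at this

section chi

variable {π : ℝ → ℝ} {M : ℝ}

lemma integrableOn_exp_neg_sub_mul_Iic (hm : Measurable π) (hb : ∀ s, |π s| ≤ M) (t u : ℝ) :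
    IntegrableOn (fun s => Real.exp (-(t - s)) * π s) (Iic u) := by
  simp_rw [mul_comm (Real.exp _)]
  exact (integrableOn_exp_neg_sub_Iic t u).bdd_mul hm.aestronglyMeasurable
    (Eventually.of_forall hb)

lemma abs_chi_le (hb : ∀ s, |π s| ≤ M) (t : ℝ) : |chi π t| ≤ M := by
  have hbound : ∀ s, ‖Real.exp (-(t - s)) * π s‖ ≤ M * Real.exp (-(t - s)) := fun s => by
    rw [norm_mul, Real.norm_of_nonneg (Real.exp_pos _).le, mul_comm]
    exact mul_le_mul_of_nonneg_right (hb s) (Real.exp_pos _).le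
  calc |chi π t| ≤ ∫ s in Iic t, M * Real.exp (-(t - s)) :=
        norm_integral_le_of_norm_le ((integrableOn_exp_neg_sub_Iic t t).const_mul M)
          (Eventually.of_forall hbound)
    _ = M := by rw [integral_const_mul, integral_exp_neg_sub_Iic, mul_one]

lemma chi_eq_exp_mul_add_setIntegral (hm : Measurable π) (hb : ∀ s, |π s| ≤ M) {t₀ t : ℝ}
    (h : t₀ ≤ t) :
    chi π t = Real.exp (-(t - t₀)) * chi π t₀ + ∫ s in Ioc t₀ t, Real.exp (-(t - s)) * π s := by
  rw [chi, ← Iic_union_Ioc_eq_Iic h, setIntegral_union (Iic_disjoint_Ioc le_rfl) measurableSet_Ioc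
    (integrableOn_exp_neg_sub_mul_Iic hm hb t t₀)
    ((integrableOn_exp_neg_sub_mul_Iic hm hb t t).mono_set Ioc_subset_Iic_self),
    chi, ← integral_const_mul]
  congr 2 with s
  rw [← mul_assoc, ← Real.exp_add]
  ring_nf

lemma abs_setIntegral_Ioc_le {δ t₀ t : ℝ} (h : t₀ ≤ t) (hδ : ∀ s ∈ Ioc t₀ t, |π s| ≤ δ) :
    |∫ s in Ioc t₀ t, Real.exp (-(t - s)) * π s| ≤ (1 - Real.exp (-(t - t₀))) * δ := by
  have hbound : ∀ s ∈ Ioc t₀ t, ‖Real.exp (-(t - s)) * π s‖ ≤ Real.exp (-(t - s)) * δ :=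
    fun s hs => by
      rw [norm_mul, Real.norm_of_nonneg (Real.exp_pos _).le]
      exact mul_le_mul_of_nonneg_left (hδ s hs) (Real.exp_pos _).le
  calc _ ≤ ∫ s in Ioc t₀ t, Real.exp (-(t - s)) * δ :=
        norm_integral_le_of_norm_le (by fun_prop : Continuous _).integrableOn_Ioc
          (ae_restrict_of_forall_mem measurableSet_Ioc hbound)
    _ = _ := by rw [integral_mul_const, integral_exp_neg_sub_Ioc h]

lemma abs_chi_le_of_abs_le_on (hm : Measurable π) (hb : ∀ s, |π s| ≤ M) {δ t₀ t : ℝ}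
    (h : t₀ ≤ t) (hδ : ∀ s ∈ Ioc t₀ t, |π s| ≤ δ) :
    |chi π t| ≤ Real.exp (-(t - t₀)) * M + (1 - Real.exp (-(t - t₀))) * δ := by
  rw [chi_eq_exp_mul_add_setIntegral hm hb h]
  refine (abs_add_le _ _).trans (add_le_add ?_ (abs_setIntegral_Ioc_le h hδ))
  rw [abs_mul, abs_of_pos (Real.exp_pos _)]
  exact mul_le_mul_of_nonneg_left (abs_chi_le hb t₀) (Real.exp_pos _).le

lemma chi_eq_of_eqOn_Ioc (hm : Measurable π) (hb : ∀ s, |π s| ≤ M) {D t₀ t : ℝ} (h : t₀ ≤ t)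
    (hD : ∀ s ∈ Ioc t₀ t, π s = D) :
    chi π t = Real.exp (-(t - t₀)) * chi π t₀ + (1 - Real.exp (-(t - t₀))) * D := by
  rw [chi_eq_exp_mul_add_setIntegral hm hb h, ← integral_exp_neg_sub_Ioc h, ← integral_mul_const,
    setIntegral_congr_fun measurableSet_Ioc fun s hs => by rw [hD s hs]]

lemma lipschitzWith_chi (hm : Measurable π) (hb : ∀ s, |π s| ≤ M) :
    LipschitzWith (2 * M).toNNReal (chi π) := by
  have hle : ∀ t t', t ≤ t' → dist (chi π t') (chi π t) ≤ 2 * M * dist t' t := fun t t' h => by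
    have hexp : 1 - (t' - t) ≤ Real.exp (-(t' - t)) := by
      linarith [Real.add_one_le_exp (-(t' - t))]
    have hexp' : Real.exp (-(t' - t)) ≤ 1 := Real.exp_le_one_iff.2 (by linarith)
    have hM := abs_chi_le hb t
    rw [Real.dist_eq, Real.dist_eq, abs_of_nonneg (sub_nonneg.2 h),
      chi_eq_exp_mul_add_setIntegral hm hb h, add_sub_right_comm, ← sub_one_mul (Real.exp _)]
    refine (abs_add_le _ _).trans ?_
    have hI := abs_setIntegral_Ioc_le h fun s _ => hb s
    rw [abs_mul, abs_of_nonpos (by linarith)]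
    nlinarith [abs_nonneg (chi π t)]
  refine LipschitzWith.of_dist_le' fun t t' => ?_
  rcases le_total t t' with h | h
  · rw [dist_comm, dist_comm t]
    exact hle t t' h
  · exact hle t' t h

lemma chi_add_sub_chi (hm : Measurable π) (hb : ∀ s, |π s| ≤ M) (c t : ℝ) :
    chi π (t + c) - chi π t = chi (fun s => π (s + c) - π s) t := by
  have hshift : chi π (t + c) = ∫ s in Iic t, Real.exp (-(t - s)) * π (s + c) := by
    have hpre : (· + c) ⁻¹' Iic (t + c) = Iic t := by ext; simp
    rw [chi, ← (measurePreserving_add_right volume c).setIntegral_preimage_emb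
      (MeasurableEquiv.addRight c).measurableEmbedding (fun s => Real.exp (-(t + c - s)) * π s),
      hpre]
    simp only [add_sub_add_right_eq_sub]
  rw [hshift, chi, chi, ← integral_sub
    (integrableOn_exp_neg_sub_mul_Iic (π := fun s => π (s + c)) (hm.comp (measurable_add_const c))
      (fun s => hb (s + c)) t t)
    (integrableOn_exp_neg_sub_mul_Iic hm hb t t)]
  simp only [mul_sub]

lemma abs_comp_add_sub_le (hb : ∀ s, |π s| ≤ M) (c s : ℝ) : |π (s + c) - π s| ≤ 2 * M :=
  (abs_sub _ _).trans (by linarith [hb s, hb (s + c)])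

lemma tendstoUniformlyOn_chi_add (hm : Measurable π) (hb : ∀ s, |π s| ≤ M) {ι : Type*}
    {l : Filter ι} {c : ι → ℝ}
    (hc : ∀ K δ : ℝ, 0 < δ → ∀ᶠ n in l, ∀ s ∈ Ioc (-K) K, |π (s + c n) - π s| ≤ δ) (α β : ℝ) :
    TendstoUniformlyOn (fun n t => chi π (t + c n)) (chi π) l (Icc α β) := by
  refine Metric.tendstoUniformlyOn_iff.2 fun ε hε => ?_
  have hM : 0 ≤ M := (abs_nonneg _).trans (hb 0)
  have hdecay : Tendsto (fun K => 2 * M * Real.exp (-(α + K))) atTop (nhds 0) := by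
    simpa using ((Real.tendsto_exp_atBot.comp (tendsto_neg_atTop_atBot.comp
      (tendsto_atTop_add_const_left _ α tendsto_id))).const_mul (2 * M))
  obtain ⟨K, hKβ, hKα, hK⟩ := ((eventually_ge_atTop β).and ((eventually_ge_atTop (-α)).and
    (hdecay.eventually (gt_mem_nhds (half_pos hε))))).exists
  filter_upwards [hc K (ε / 2) (half_pos hε)] with n hn t ht
  have hq := abs_chi_le_of_abs_le_on (π := fun s => π (s + c n) - π s) (M := 2 * M)
    ((hm.comp (measurable_add_const _)).sub hm) (abs_comp_add_sub_le hb (c n))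
    (show -K ≤ t by linarith [ht.1])
    (fun s hs => hn s ⟨hs.1, hs.2.trans (ht.2.trans hKβ)⟩)
  have he : Real.exp (-(t - -K)) ≤ Real.exp (-(α + K)) := Real.exp_le_exp.2 (by linarith [ht.1])
  have he1 : Real.exp (-(t - -K)) ≤ 1 := Real.exp_le_one_iff.2 (by linarith [ht.1])
  rw [dist_comm, Real.dist_eq, chi_add_sub_chi hm hb]
  nlinarith [Real.exp_pos (-(t - -K))]

lemma exists_forall_Icc_le_abs_chi_add_sub (hm : Measurable π) (hb : ∀ s, |π s| ≤ M)
    {c D N : ℝ} (hD : ∀ s ∈ Ico N (N + 1), π (s + c) - π s = D) :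
    ∃ u ∈ Icc (N + 1 / 8) (N + 3 / 4), ∀ t ∈ Icc (u - 1 / 8) (u + 1 / 8),
      |D| / 16 ≤ |chi π (t + c) - chi π t| := by
  set q := fun s => π (s + c) - π s
  have hq : Measurable q := (hm.comp (measurable_add_const c)).sub hm
  obtain ⟨r, hr, hlarge⟩ := exists_forall_Icc_le_abs_exp_mul_add (chi q N) D
  refine ⟨N + r, ⟨by linarith [hr.1], by linarith [hr.2]⟩, fun t ht => ?_⟩
  have hNt : N ≤ t := by linarith [ht.1, hr.1]
  rw [chi_add_sub_chi hm hb, chi_eq_of_eqOn_Ioc hq (abs_comp_add_sub_le hb c) hNt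
    fun s hs => hD s ⟨hs.1.le, by linarith [hs.2, ht.2, hr.2]⟩]
  exact hlarge (t - N) ⟨by linarith [ht.1], by linarith [ht.2]⟩

end chi

lemma eventually_abs_comp_floor_add_sub_le {i : ℤ → ℝ} {ζ : ℕ → ℕ}
    (hconv : ∀ K : ℕ, ∀ ε > (0 : ℝ), ∃ N : ℕ, ∀ n ≥ N, ∀ k : ℤ,
      |k| ≤ (K : ℤ) → |i (k + ζ n) - i k| < ε) (K δ : ℝ) (hδ : 0 < δ) :
    ∀ᶠ n in atTop, ∀ s ∈ Ioc (-K) K, |i ⌊s + ζ n⌋ - i ⌊s⌋| ≤ δ := by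
  obtain ⟨N, hN⟩ := hconv ⌈K⌉₊ δ hδ
  filter_upwards [eventually_ge_atTop N] with n hn s hs
  have hK := Nat.le_ceil K
  have hlow : -(⌈K⌉₊ : ℤ) ≤ ⌊s⌋ := Int.le_floor.2 (by push_cast; linarith [hs.1])
  have hup : ⌊s⌋ ≤ (⌈K⌉₊ : ℤ) := by
    have : (⌊s⌋ : ℝ) ≤ ⌈K⌉₊ := (Int.floor_le s).trans (hs.2.trans hK)
    exact_mod_cast this
  rw [Int.floor_add_natCast]
  exact (hN n hn ⌊s⌋ (abs_le.2 ⟨hlow, hup⟩)).le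

lemma comp_floor_add_sub_eq_of_mem_Ico (i : ℤ → ℝ) (k m : ℕ) {s : ℝ}
    (hs : s ∈ Ico (m : ℝ) (m + 1)) :
    i ⌊s + k⌋ - i ⌊s⌋ = i ((k : ℤ) + (m : ℤ)) - i m := by
  have hfloor : ⌊s⌋ = m := Int.floor_eq_iff.2 (by exact_mod_cast hs)
  rw [Int.floor_add_natCast, hfloor, add_comm]

theorem chi_unpredictable_general (a b : ℝ) (hab : a ≠ b) (i : ℤ → ℝ)
    (hi : ∀ k, i k = a ∨ i k = b)
    (ζ η : ℕ → ℕ)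
    (hη : Tendsto η atTop atTop)
    (hconv : ∀ K : ℕ, ∀ ε > (0 : ℝ), ∃ N : ℕ, ∀ n ≥ N, ∀ k : ℤ,
      |k| ≤ (K : ℤ) → |i (k + ζ n) - i k| < ε)
    (hsep : ∀ n, |a - b| ≤ |i ((ζ n : ℤ) + (η n : ℤ)) - i ((η n : ℤ))|) :
    UniformContinuous (chi (fun s => i ⌊s⌋)) ∧
    (∃ C : ℝ, ∀ t, |chi (fun s => i ⌊s⌋) t| ≤ C) ∧
    (∀ α β : ℝ, TendstoUniformlyOn
      (fun n t => chi (fun s => i ⌊s⌋) (t + ζ n)) (chi (fun s => i ⌊s⌋))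
      atTop (Set.Icc α β)) ∧
    ∃ σ > (0 : ℝ), ∃ ε₁ > (0 : ℝ), ∃ u : ℕ → ℝ, Tendsto u atTop atTop ∧
      ∀ n : ℕ, ∀ t ∈ Set.Icc (u n - σ) (u n + σ),
        ε₁ ≤ |chi (fun s => i ⌊s⌋) (t + ζ n) - chi (fun s => i ⌊s⌋) t| := by
  have hm : Measurable fun s : ℝ => i ⌊s⌋ := measurable_from_top.comp Int.measurable_floor
  have hb : ∀ s : ℝ, |i ⌊s⌋| ≤ max |a| |b| := fun s => by
    rcases hi ⌊s⌋ with h | h <;> simp [h]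
  choose u hu hlarge using fun n => exists_forall_Icc_le_abs_chi_add_sub hm hb
    (fun s hs => comp_floor_add_sub_eq_of_mem_Ico i (ζ n) (η n) hs)
  refine ⟨(lipschitzWith_chi hm hb).uniformContinuous, ⟨_, abs_chi_le hb⟩,
    tendstoUniformlyOn_chi_add hm hb (eventually_abs_comp_floor_add_sub_le hconv),
    1 / 8, by norm_num, |a - b| / 16, div_pos (abs_pos.2 (sub_ne_zero.2 hab)) (by norm_num), u,
    tendsto_atTop_mono (fun n => (le_add_of_nonneg_right (by norm_num)).trans (hu n).1)
      (tendsto_natCast_atTop_atTop.comp hη),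
    fun n t ht => (div_le_div_of_nonneg_right (hsep n) (by norm_num)).trans (hlarge n t ht)⟩

/-- The main result: the function `χ` built from an unpredictable sequence `i*`
with values in `{a, b}` is an unpredictable function. -/
theorem chi_unpredictable (a b : ℝ) (hab : a ≠ b) (i : ℤ → ℝ)
    (hi : ∀ k, i k = a ∨ i k = b)
    (ζ η : ℕ → ℕ) (hζpos : ∀ n, 0 < ζ n) (hηpos : ∀ n, 0 < η n)
    (hζ : Tendsto ζ atTop atTop) (hη : Tendsto η atTop atTop)
    (hconv : ∀ K : ℕ, ∀ ε > (0 : ℝ), ∃ N : ℕ, ∀ n ≥ N, ∀ k : ℤ,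
      |k| ≤ (K : ℤ) → |i (k + ζ n) - i k| < ε)
    (hsep : ∀ n, |a - b| ≤ |i ((ζ n : ℤ) + (η n : ℤ)) - i ((η n : ℤ))|) :
    UniformContinuous (chi (fun s => i ⌊s⌋)) ∧
    (∃ C : ℝ, ∀ t, |chi (fun s => i ⌊s⌋) t| ≤ C) ∧
    (∀ α β : ℝ, TendstoUniformlyOn
      (fun n t => chi (fun s => i ⌊s⌋) (t + ζ n)) (chi (fun s => i ⌊s⌋))
      atTop (Set.Icc α β)) ∧
    ∃ σ > (0 : ℝ), ∃ ε₁ > (0 : ℝ), ∃ u : ℕ → ℝ, Tendsto u atTop atTop ∧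
      ∀ n : ℕ, ∀ t ∈ Set.Icc (u n - σ) (u n + σ),
        ε₁ ≤ |chi (fun s => i ⌊s⌋) (t + ζ n) - chi (fun s => i ⌊s⌋) t| :=
  chi_unpredictable_general a b hab i hi ζ η hη hconv hsep
end
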